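/- arXiv:2510.22663 — 7 statements merged into one kernel-verified Lean document; each statement's English description precedes it below -/
import Mathlib

section
/- For any integer q ≥ 1 and real σ, the function u(t,x) = 2πqx + Ωt + θ with Ω = ω + p·sin(2πqκ)·sin(σ)/(πq) satisfies the integro-differential equation ∂u/∂t(t,x) = ω + p·∫_{x-κ}^{x+κ} sin(u(t,y) − u(t,x) + σ) dy for all t and x. -/
open Real Set intervalIntegral

theorem twisted_solution_satisfies_CL
    (p κ ω θ σ : ℝ) (hp : 0 < p) (hκ : 0 < κ) (hκ' : κ < 1/2)
    (q : ℕ) (hq : 1 ≤ q)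
    (Ω : ℝ) (hΩ : Ω = ω + p * Real.sin (2*π*q*κ) * Real.sin σ / (π*q))
    (u : ℝ → ℝ → ℝ) (hu : ∀ t x, u t x = 2*π*q*x + Ω*t + θ) :
    ∀ t x : ℝ,
      HasDerivAt (fun s => u s x)
        (ω + p * ∫ y in (x-κ)..(x+κ), Real.sin (u t y - u t x + σ)) t := by
  intro t x
  have hπ : (π:ℝ) ≠ 0 := Real.pi_ne_zero
  have hqR : (q:ℝ) ≠ 0 := Nat.cast_ne_zero.mpr (by omega)
  have ha : (2*π*(q:ℝ)) ≠ 0 := by positivity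
  have key : (∫ y in (x-κ)..(x+κ), Real.sin (u t y - u t x + σ))
      = Real.sin (2*π*q*κ) * Real.sin σ / (π*q) := by
    have harg : ∀ y : ℝ, u t y - u t x + σ = (2*π*(q:ℝ))*y + (σ - 2*π*q*x) := by
      intro y; rw [hu, hu]; ring
    simp_rw [harg]
    rw [intervalIntegral.integral_comp_mul_add Real.sin ha (σ - 2*π*q*x),
      integral_sin]
    have h1 : (2*π*(q:ℝ)) * (x - κ) + (σ - 2*π*q*x) = σ - 2*π*q*κ := by ring
    have h2 : (2*π*(q:ℝ)) * (x + κ) + (σ - 2*π*q*x) = σ + 2*π*q*κ := by ring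
    rw [h1, h2, Real.cos_sub, Real.cos_add]
    rw [smul_eq_mul]
    field_simp
    ring
  rw [key]
  have hΩ' : ω + p * (Real.sin (2*π*q*κ) * Real.sin σ / (π*q)) = Ω := by rw [hΩ]; ring
  rw [hΩ']
  have hfun : (fun s => u s x) = fun s => 2*π*q*x + Ω*s + θ :=
    funext fun s => hu s x
  rw [hfun]
  simpa using (((hasDerivAt_id t).const_mul Ω).const_add (2*π*(q:ℝ)*x)).add_const θ
end

section
/- Let q be a positive integer, σ real, 0 < κ < 1/2, and set χ₁(q,q) = κ + sin(4πqκ)/(4πq) − sin(2πqκ)/(πq) and χ₂(q,q) = κ − sin(4πqκ)/(4πq). Then the functions φ±(x) = cos(2πqx) ± i·sin(2πqx) are eigenfunctions of the operator (Lφ)(x) = p∫_{x-κ}^{x+κ} cos(2πq(y−x)+σ)φ(y)dy − (p cos σ sin(2πqκ)/(πq))φ(x) with eigenvalues λ± = p·χ₁(q,q)·cos σ ∓ i·p·χ₂(q,q)·sin σ. -/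
/-!
With `a = 2πq`, the functions `φ±` are `y ↦ exp(±i a y)`. Writing
`cos(a t + σ) = (e^{i(at+σ)} + e^{-i(at+σ)}) / 2`, the kernel times `e^{iat}` splits into the constant
`e^{-iσ}/2` and the oscillation `e^{iσ} e^{2iat}/2`, whose integrals over `[-κ, κ]` are `κ e^{-iσ}` and
`e^{iσ} sin(2aκ)/(2a)`; translating the window to `[x - κ, x + κ]` multiplies the result by `e^{iax}`.
The case of `φ-` is the case of `φ+` for `(-a, -σ)`, which leaves the kernel unchanged.
-/

open Real intervalIntegral Complex

theorem integral_cexp_mul_I_symm {b : ℝ} (hb : b ≠ 0) (κ : ℝ) :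
    ∫ t in -κ..κ, cexp (b * t * I) = 2 * Real.sin (b * κ) / b := by
  have hbI : (b : ℂ) * I ≠ 0 := mul_ne_zero (ofReal_ne_zero.mpr hb) I_ne_zero
  simp_rw [mul_right_comm _ _ I]
  rw [integral_exp_mul_complex hbI, ofReal_sin, ofReal_mul, two_sin]
  field_simp
  rw [I_sq, ofReal_neg, mul_neg]
  ring

theorem cos_add_mul_cexp_mul_I (a σ t : ℝ) :
    (Real.cos (a * t + σ) : ℂ) * cexp (a * t * I)
      = (cexp (σ * I) * cexp (2 * a * t * I) + cexp (-σ * I)) / 2 := by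
  rw [ofReal_cos, ← mul_div_cancel_left₀ (Complex.cos _) two_ne_zero, two_cos, div_mul_eq_mul_div,
    add_mul, ← Complex.exp_add, ← Complex.exp_add, ← Complex.exp_add]
  push_cast
  ring_nf

theorem integral_cos_add_mul_cexp_symm {a : ℝ} (ha : a ≠ 0) (κ σ : ℝ) :
    ∫ t in -κ..κ, (Real.cos (a * t + σ) : ℂ) * cexp (a * t * I)
      = ((κ + Real.sin (2 * a * κ) / (2 * a)) * Real.cos σ : ℝ)
        - I * ((κ - Real.sin (2 * a * κ) / (2 * a)) * Real.sin σ : ℝ) := by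
  have h2a : (2 * a : ℝ) ≠ 0 := mul_ne_zero two_ne_zero ha
  have hexp := integral_cexp_mul_I_symm h2a κ
  push_cast at hexp
  simp_rw [cos_add_mul_cexp_mul_I, div_eq_mul_inv _ (2 : ℂ)]
  rw [integral_mul_const, integral_add, integral_const_mul, hexp, integral_const, real_smul,
    ← cos_sub_sin_I, ← cos_add_sin_I]
  · push_cast
    field_simp
    ring
  all_goals exact Continuous.intervalIntegrable (by fun_prop) _ _

theorem integral_cos_sub_add_mul_cexp {a : ℝ} (ha : a ≠ 0) (κ σ x : ℝ) :
    ∫ y in (x - κ)..(x + κ), (Real.cos (a * (y - x) + σ) : ℂ) * cexp (a * y * I)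
      = (((κ + Real.sin (2 * a * κ) / (2 * a)) * Real.cos σ : ℝ)
        - I * ((κ - Real.sin (2 * a * κ) / (2 * a)) * Real.sin σ : ℝ)) * cexp (a * x * I) := by
  set f : ℝ → ℂ := fun t => Real.cos (a * t + σ) * cexp (a * t * I)
  have hshift : (fun y : ℝ => (Real.cos (a * (y - x) + σ) : ℂ) * cexp (a * y * I))
      = fun y => f (y - x) * cexp (a * x * I) := by
    ext y
    simp only [f, mul_assoc, ← Complex.exp_add]
    push_cast
    ring_nf
  rw [hshift, integral_mul_const, integral_comp_sub_right f, sub_sub_cancel_left,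
    add_sub_cancel_left, integral_cos_add_mul_cexp_symm ha]

theorem integral_cos_sub_add_mul_cexp_neg {a : ℝ} (ha : a ≠ 0) (κ σ x : ℝ) :
    ∫ y in (x - κ)..(x + κ), (Real.cos (a * (y - x) + σ) : ℂ) * cexp (-a * y * I)
      = (((κ + Real.sin (2 * a * κ) / (2 * a)) * Real.cos σ : ℝ)
        + I * ((κ - Real.sin (2 * a * κ) / (2 * a)) * Real.sin σ : ℝ)) * cexp (-a * x * I) := by
  have hreflect : ∀ y, Real.cos (a * (y - x) + σ) = Real.cos (-a * (y - x) + -σ) := by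
    intro y
    rw [← Real.cos_neg]
    ring_nf
  have h := integral_cos_sub_add_mul_cexp (neg_ne_zero.mpr ha) κ (-σ) x
  rw [mul_neg, neg_mul, Real.sin_neg, neg_div_neg_eq, Real.cos_neg, Real.sin_neg,
    ofReal_neg] at h
  simp_rw [hreflect, h]
  push_cast
  ring

theorem twisted_eigenfunctions_general
    (p κ σ : ℝ)
    (q : ℕ) (hq : 1 ≤ q)
    (χ₁ χ₂ : ℝ)
    (hχ₁ : χ₁ = κ + Real.sin (4*π*q*κ) / (4*π*q) - Real.sin (2*π*q*κ) / (π*q))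
    (hχ₂ : χ₂ = κ - Real.sin (4*π*q*κ) / (4*π*q))
    (L : (ℝ → ℂ) → (ℝ → ℂ))
    (hL : ∀ φ : ℝ → ℂ, ∀ x : ℝ,
      L φ x = (p:ℂ) * (∫ y in (x-κ)..(x+κ), (Real.cos (2*π*q*(y-x) + σ) : ℂ) * φ y)
              - ((p * Real.cos σ * Real.sin (2*π*q*κ) / (π*q) : ℝ) : ℂ) * φ x)
    (φp φm : ℝ → ℂ)
    (hφp : ∀ x, φp x = (Real.cos (2*π*q*x) : ℂ) + Complex.I * (Real.sin (2*π*q*x) : ℂ))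
    (hφm : ∀ x, φm x = (Real.cos (2*π*q*x) : ℂ) - Complex.I * (Real.sin (2*π*q*x) : ℂ)) :
    (∀ x : ℝ, L φp x
        = ((p * χ₁ * Real.cos σ : ℝ) - Complex.I * (p * χ₂ * Real.sin σ : ℝ)) * φp x)
    ∧ (∀ x : ℝ, L φm x
        = ((p * χ₁ * Real.cos σ : ℝ) + Complex.I * (p * χ₂ * Real.sin σ : ℝ)) * φm x) := by
  have ha : 2 * π * q ≠ 0 := by positivity
  have hφp' : φp = fun x : ℝ => cexp (↑(2 * π * q) * x * I) := by
    ext x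
    rw [hφp, ← cos_add_sin_I]
    push_cast
    ring
  have hφm' : φm = fun x : ℝ => cexp (-↑(2 * π * q) * x * I) := by
    ext x
    rw [hφm, neg_mul, ← cos_sub_sin_I]
    push_cast
    ring
  have h4 : 2 * (2 * π * q) * κ = 4 * π * q * κ := by ring
  constructor
  · intro x
    simp only [hL, hφp']
    rw [integral_cos_sub_add_mul_cexp ha, h4, hχ₁, hχ₂]
    push_cast
    field_simp
    ring
  · intro x
    simp only [hL, hφm']
    rw [integral_cos_sub_add_mul_cexp_neg ha, h4, hχ₁, hχ₂]
    push_cast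
    field_simp
    ring

theorem twisted_eigenfunctions
    (p κ σ : ℝ) (hp : 0 < p) (hκ : 0 < κ) (hκ' : κ < 1/2)
    (q : ℕ) (hq : 1 ≤ q)
    (χ₁ χ₂ : ℝ)
    (hχ₁ : χ₁ = κ + Real.sin (4*π*q*κ) / (4*π*q) - Real.sin (2*π*q*κ) / (π*q))
    (hχ₂ : χ₂ = κ - Real.sin (4*π*q*κ) / (4*π*q))
    (L : (ℝ → ℂ) → (ℝ → ℂ))
    (hL : ∀ φ : ℝ → ℂ, ∀ x : ℝ,
      L φ x = (p:ℂ) * (∫ y in (x-κ)..(x+κ), (Real.cos (2*π*q*(y-x) + σ) : ℂ) * φ y)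
              - ((p * Real.cos σ * Real.sin (2*π*q*κ) / (π*q) : ℝ) : ℂ) * φ x)
    (φp φm : ℝ → ℂ)
    (hφp : ∀ x, φp x = (Real.cos (2*π*q*x) : ℂ) + Complex.I * (Real.sin (2*π*q*x) : ℂ))
    (hφm : ∀ x, φm x = (Real.cos (2*π*q*x) : ℂ) - Complex.I * (Real.sin (2*π*q*x) : ℂ)) :
    (∀ x : ℝ, L φp x
        = ((p * χ₁ * Real.cos σ : ℝ) - Complex.I * (p * χ₂ * Real.sin σ : ℝ)) * φp x)
    ∧ (∀ x : ℝ, L φm x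
        = ((p * χ₁ * Real.cos σ : ℝ) + Complex.I * (p * χ₂ * Real.sin σ : ℝ)) * φm x) :=
  twisted_eigenfunctions_general p κ σ q hq χ₁ χ₂ hχ₁ hχ₂ L hL φp φm hφp hφm
end

section
/- Every positive critical point of φ(ζ) = (sin ζ/ζ)(2 − cos ζ), i.e., every ζ > 0 satisfying sin ζ/ζ = (2cos²ζ − 2cos ζ − 1)/(cos ζ − 2), when listed in increasing order as ζ₁ < ζ₂ < ⋯, satisfies ζⱼ ∈ ((j−1)π, jπ) for each j ≥ 1; in particular there is exactly one such critical point in each interval ((j−1)π, jπ). -/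
/-!
Clearing denominators, the critical points are the positive zeros of `F ζ = ζ² φ'(ζ)`, whose
derivative is `F' ζ = 2 ζ sin ζ (2 cos ζ - 1)`. On `(kπ, (k+1)π)` the factor `sin ζ` has the
constant sign `(-1)^k` while `cos ζ` is monotone, so `F` increases up to `kπ + arccos ((-1)^k / 2)`
and decreases after it.
Since `F (kπ) = kπ (2 (-1)^k - 1)`, the values of `F` at consecutive multiples of `π` have
opposite signs (except `F 0 = 0`), and a unimodal function with such endpoint values has exactly
one zero in between. Finally no positive multiple of `π` is a zero.
-/

open Real Set

theorem existsUnique_zero_of_strictMonoOn_of_strictAntiOn {f : ℝ → ℝ} {a b c : ℝ}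
    (hf : ContinuousOn f (Icc a b)) (hac : a < c) (hcb : c < b)
    (hmono : StrictMonoOn f (Icc a c)) (hanti : StrictAntiOn f (Icc c b))
    (hsign : (0 ≤ f a ∧ f b < 0) ∨ (f a < 0 ∧ 0 < f b)) :
    ∃! x, x ∈ Ioo a b ∧ f x = 0 := by
  have ha_mem : a ∈ Icc a c := left_mem_Icc.2 hac.le
  have hc_mem : c ∈ Icc a c := right_mem_Icc.2 hac.le
  have hc_mem' : c ∈ Icc c b := left_mem_Icc.2 hcb.le
  have hb_mem : b ∈ Icc c b := right_mem_Icc.2 hcb.le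
  rcases hsign with ⟨ha, hb⟩ | ⟨ha, hb⟩
  · have hc : 0 < f c := ha.trans_lt (hmono ha_mem hc_mem hac)
    obtain ⟨x, hx, hx0⟩ :=
      intermediate_value_Ioo' hcb.le (hf.mono (Icc_subset_Icc_left hac.le)) ⟨hb, hc⟩
    refine ⟨x, ⟨⟨hac.trans hx.1, hx.2⟩, hx0⟩, fun y ⟨hy, hy0⟩ => ?_⟩
    have hcy : c < y := by
      by_contra! hyc
      linarith [hmono ha_mem ⟨hy.1.le, hyc⟩ hy.1]
    exact hanti.injOn ⟨hcy.le, hy.2.le⟩ (Ioo_subset_Icc_self hx) (hy0.trans hx0.symm)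
  · have hc : 0 < f c := hb.trans (hanti hc_mem' hb_mem hcb)
    obtain ⟨x, hx, hx0⟩ :=
      intermediate_value_Ioo hac.le (hf.mono (Icc_subset_Icc_right hcb.le)) ⟨ha, hc⟩
    refine ⟨x, ⟨⟨hx.1, hx.2.trans hcb⟩, hx0⟩, fun y ⟨hy, hy0⟩ => ?_⟩
    have hyc : y < c := by
      by_contra! hcy
      linarith [hanti ⟨hcy, hy.2.le⟩ hb_mem hy.2]
    exact hmono.injOn ⟨hy.1.le, hyc.le⟩ (Ioo_subset_Icc_self hx) (hy0.trans hx0.symm)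

theorem exists_nat_mem_Ioo_mul_of_forall_ne {p ζ : ℝ} (hp : 0 < p) (hζ : 0 ≤ ζ)
    (hne : ∀ k : ℕ, ζ ≠ k * p) : ∃ k : ℕ, ζ ∈ Ioo (k * p) ((k + 1) * p) := by
  refine ⟨⌊ζ / p⌋₊, lt_of_le_of_ne ?_ (hne _).symm, ?_⟩
  · exact (le_div_iff₀ hp).1 (Nat.floor_le (div_nonneg hζ hp.le))
  · exact (div_lt_iff₀ hp).1 (Nat.lt_floor_add_one _)

theorem sin_mul_two_cos_sub_one_add_nat_mul_pi (t : ℝ) (k : ℕ) :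
    sin (t + k * π) * (2 * cos (t + k * π) - 1) = 2 * sin t * (cos t - (-1) ^ k / 2) := by
  rw [sin_add_nat_mul_pi, cos_add_nat_mul_pi]
  rcases neg_one_pow_eq_or ℝ k with h | h <;> rw [h] <;> ring

/-- `ζ² φ'(ζ)` for `φ ζ = (sin ζ / ζ) (2 - cos ζ)`. -/
noncomputable def phiDerivNumerator (ζ : ℝ) : ℝ :=
  sin ζ * (cos ζ - 2) - ζ * (2 * cos ζ ^ 2 - 2 * cos ζ - 1)

theorem sin_div_eq_iff_phiDerivNumerator_eq_zero {ζ : ℝ} (hζ : 0 < ζ) :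
    sin ζ / ζ = (2 * cos ζ ^ 2 - 2 * cos ζ - 1) / (cos ζ - 2) ↔ phiDerivNumerator ζ = 0 := by
  have hcos : cos ζ - 2 ≠ 0 := by linarith [cos_le_one ζ]
  rw [div_eq_div_iff hζ.ne' hcos, phiDerivNumerator, sub_eq_zero, mul_comm _ ζ]

theorem hasDerivAt_phiDerivNumerator (x : ℝ) :
    HasDerivAt phiDerivNumerator (2 * x * (sin x * (2 * cos x - 1))) x := by
  have h := ((hasDerivAt_sin x).mul ((hasDerivAt_cos x).sub_const 2)).sub
    ((hasDerivAt_id x).mul ((((hasDerivAt_cos x).pow 2).const_mul 2).sub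
      ((hasDerivAt_cos x).const_mul 2) |>.sub_const 1))
  refine h.congr_deriv ?_
  simp only [id_eq, Pi.sub_apply, Pi.pow_apply]
  linear_combination -sin_sq_add_cos_sq x

theorem continuous_phiDerivNumerator : Continuous phiDerivNumerator := by
  unfold phiDerivNumerator
  fun_prop

theorem phiDerivNumerator_nat_mul_pi (k : ℕ) :
    phiDerivNumerator (k * π) = k * π * (2 * (-1) ^ k - 1) := by
  rw [phiDerivNumerator, sin_nat_mul_pi, cos_nat_mul_pi]
  rcases neg_one_pow_eq_or ℝ k with h | h <;> rw [h] <;> ring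

theorem neg_one_pow_div_two_mem_Ioo (k : ℕ) : (-1 : ℝ) ^ k / 2 ∈ Ioo (-1) 1 := by
  rcases neg_one_pow_eq_or ℝ k with h | h <;> rw [h] <;> norm_num

theorem strictMonoOn_phiDerivNumerator (k : ℕ) :
    StrictMonoOn phiDerivNumerator (Icc (k * π) (k * π + arccos ((-1) ^ k / 2))) := by
  refine strictMonoOn_of_deriv_pos (convex_Icc _ _) continuous_phiDerivNumerator.continuousOn ?_
  intro x hx
  rw [interior_Icc] at hx
  obtain ⟨hy₁, hy₂⟩ := neg_one_pow_div_two_mem_Ioo k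
  have hcos : (-1) ^ k / 2 < cos (x - k * π) :=
    (cos_arccos hy₁.le hy₂.le).symm.trans_lt <|
      cos_lt_cos_of_nonneg_of_le_pi (by linarith [hx.1]) (arccos_le_pi _) (by linarith [hx.2])
  have hsin : 0 < sin (x - k * π) :=
    sin_pos_of_pos_of_lt_pi (by linarith [hx.1]) (by linarith [hx.2, arccos_le_pi ((-1) ^ k / 2)])
  rw [(hasDerivAt_phiDerivNumerator x).deriv, ← sub_add_cancel x (k * π),
    sin_mul_two_cos_sub_one_add_nat_mul_pi]
  have hkπ : (0 : ℝ) ≤ k * π := by positivity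
  exact mul_pos (by linarith [hx.1]) (mul_pos (mul_pos two_pos hsin) (sub_pos.2 hcos))

theorem strictAntiOn_phiDerivNumerator (k : ℕ) :
    StrictAntiOn phiDerivNumerator (Icc (k * π + arccos ((-1) ^ k / 2)) ((k + 1) * π)) := by
  refine strictAntiOn_of_deriv_neg (convex_Icc _ _) continuous_phiDerivNumerator.continuousOn ?_
  intro x hx
  rw [interior_Icc] at hx
  obtain ⟨hy₁, hy₂⟩ := neg_one_pow_div_two_mem_Ioo k
  have hcos : cos (x - k * π) < (-1) ^ k / 2 :=
    (cos_lt_cos_of_nonneg_of_le_pi (arccos_nonneg _) (by linarith [hx.2]) (by linarith [hx.1])).trans_eq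
      (cos_arccos hy₁.le hy₂.le)
  have hsin : 0 < sin (x - k * π) :=
    sin_pos_of_pos_of_lt_pi (by linarith [hx.1, arccos_nonneg ((-1) ^ k / 2)]) (by linarith [hx.2])
  rw [(hasDerivAt_phiDerivNumerator x).deriv, ← sub_add_cancel x (k * π),
    sin_mul_two_cos_sub_one_add_nat_mul_pi]
  have hkπ : (0 : ℝ) ≤ k * π := by positivity
  exact mul_neg_of_pos_of_neg (by linarith [hx.1, arccos_nonneg ((-1) ^ k / 2)])
    (mul_neg_of_pos_of_neg (mul_pos two_pos hsin) (sub_neg.2 hcos))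

theorem existsUnique_phiDerivNumerator_eq_zero_mem_Ioo (k : ℕ) :
    ∃! x, x ∈ Ioo (k * π) ((k + 1) * π) ∧ phiDerivNumerator x = 0 := by
  obtain ⟨hy₁, hy₂⟩ := neg_one_pow_div_two_mem_Ioo k
  refine existsUnique_zero_of_strictMonoOn_of_strictAntiOn
    continuous_phiDerivNumerator.continuousOn (c := k * π + arccos ((-1) ^ k / 2))
    (by linarith [arccos_pos.2 hy₂]) (by linarith [arccos_lt_pi.2 hy₁])
    (strictMonoOn_phiDerivNumerator k) (strictAntiOn_phiDerivNumerator k) ?_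
  have hend := phiDerivNumerator_nat_mul_pi (k + 1)
  push_cast at hend
  rw [phiDerivNumerator_nat_mul_pi, hend, pow_succ]
  have hkπ : (0 : ℝ) ≤ k * π := by positivity
  rcases neg_one_pow_eq_or ℝ k with h | h <;> rw [h]
  · left; constructor <;> nlinarith [pi_pos]
  · have hk : (0 : ℝ) < k := Nat.cast_pos.2 (Nat.pos_of_ne_zero (by rintro rfl; norm_num at h))
    right; constructor <;> nlinarith [pi_pos]

theorem phiDerivNumerator_nat_mul_pi_ne_zero {k : ℕ} (hk : k ≠ 0) :
    phiDerivNumerator (k * π) ≠ 0 := by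
  rw [phiDerivNumerator_nat_mul_pi]
  refine mul_ne_zero (mul_ne_zero (Nat.cast_ne_zero.2 hk) pi_ne_zero) ?_
  rcases neg_one_pow_eq_or ℝ k with h | h <;> rw [h] <;> norm_num

theorem critical_points_localization
    (S : Set ℝ)
    (hS : S = {ζ : ℝ | 0 < ζ ∧
      Real.sin ζ / ζ
        = (2 * (Real.cos ζ)^2 - 2 * Real.cos ζ - 1) / (Real.cos ζ - 2)}) :
    (∀ j : ℕ, 1 ≤ j →
        ∃! ζ : ℝ, ζ ∈ S ∧ ζ ∈ Set.Ioo (((j:ℝ) - 1) * π) ((j:ℝ) * π))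
    ∧ (∀ ζ ∈ S, ∃ j : ℕ, 1 ≤ j ∧ ζ ∈ Set.Ioo (((j:ℝ) - 1) * π) ((j:ℝ) * π)) := by
  have hmem : ∀ ζ, 0 < ζ → (ζ ∈ S ↔ phiDerivNumerator ζ = 0) := fun ζ hζ => by
    rw [hS, mem_ofPred_eq, sin_div_eq_iff_phiDerivNumerator_eq_zero hζ, and_iff_right hζ]
  have hIoo (k : ℕ) : Ioo ((((k + 1 : ℕ) : ℝ) - 1) * π) ((k + 1 : ℕ) * π) =
      Ioo (k * π) ((k + 1) * π) := by
    push_cast; rw [add_sub_cancel_right]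
  refine ⟨fun j hj => ?_, fun ζ hζS => ?_⟩
  · obtain ⟨k, rfl⟩ := Nat.exists_eq_add_of_le' hj
    rw [hIoo]
    have hpos : ∀ x ∈ Ioo (k * π) ((k + 1) * π), 0 < x := fun x hx =>
      (by positivity : (0 : ℝ) ≤ k * π).trans_lt hx.1
    refine (existsUnique_congr fun x => ?_).2 (existsUnique_phiDerivNumerator_eq_zero_mem_Ioo k)
    exact ⟨fun ⟨hxS, hx⟩ => ⟨hx, (hmem x (hpos x hx)).1 hxS⟩,
      fun ⟨hx, hx0⟩ => ⟨(hmem x (hpos x hx)).2 hx0, hx⟩⟩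
  · have hζ : 0 < ζ := by rw [hS] at hζS; exact hζS.1
    obtain ⟨k, hk⟩ := exists_nat_mem_Ioo_mul_of_forall_ne pi_pos hζ.le fun k hk => by
      have hk0 : k ≠ 0 := by rintro rfl; simp [hk] at hζ
      exact phiDerivNumerator_nat_mul_pi_ne_zero hk0 (hk ▸ (hmem ζ hζ).1 hζS)
    exact ⟨k + 1, Nat.le_add_left 1 k, by rwa [hIoo]⟩
end

section
/- Fix a positive integer q and let χ₁(κ; q, q) = κ + sin(4πqκ)/(4πq) − sin(2πqκ)/(πq) for 0 < κ < 1/2. Then χ₁(κ; q, q) < 0 for κ ∈ (0, ζ₀/(2πq)) and χ₁(κ; q, q) > 0 for κ ∈ (ζ₀/(2πq), 1/2), where ζ₀ is the unique root of (sin ζ/ζ)(2 − cos ζ) = 1 in (0, π). -/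
open Real Set

/-
Substituting ζ = 2πqκ gives χ₁(κ) = -g(ζ)/(2πq) with g(ζ) = sin ζ (2 - cos ζ) - ζ = ζ(φ(ζ) - 1)
(`chi1Profile`). Since g' = 2 cos ζ (1 - cos ζ), g increases from g(0) = 0 on [0, π/2], and
g(ζ) ≤ 3 - ζ < 0 for ζ ≥ π. With the uniqueness of ζ₀, g has no zero on (0, ∞) other than ζ₀, so by
the intermediate value theorem it is positive on (0, ζ₀) and negative on (ζ₀, ∞).
-/

theorem IsPreconnected.lt_of_forall_ne {X α : Type*} [TopologicalSpace X] [LinearOrder α]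
    [TopologicalSpace α] [OrderClosedTopology α] {s : Set X} (hs : IsPreconnected s)
    {f : X → α} (hf : ContinuousOn f s) {c : α} (hfc : ∀ x ∈ s, f x ≠ c) {a b : X}
    (ha : a ∈ s) (hb : b ∈ s) (hca : c < f a) : c < f b := by
  by_contra! hbc
  obtain ⟨x, hx, hfx⟩ := hs.intermediate_value hb ha hf ⟨hbc, hca.le⟩
  exact hfc x hx hfx

noncomputable def chi1Profile (ζ : ℝ) : ℝ := sin ζ * (2 - cos ζ) - ζ

lemma chi1_eq_neg_chi1Profile_div (q κ : ℝ) (hq : q ≠ 0) :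
    κ + sin (4*π*q*κ) / (4*π*q) - sin (2*π*q*κ) / (π*q) = -chi1Profile (2*π*q*κ) / (2*π*q) := by
  have h4 : 4*π*q*κ = 2 * (2*π*q*κ) := by ring
  rw [chi1Profile, h4, sin_two_mul]
  field_simp
  ring

lemma continuous_chi1Profile : Continuous chi1Profile := by
  unfold chi1Profile; fun_prop

lemma hasDerivAt_chi1Profile (x : ℝ) :
    HasDerivAt chi1Profile (2 * cos x * (1 - cos x)) x := by
  have h := ((hasDerivAt_sin x).mul ((hasDerivAt_cos x).const_sub 2)).sub (hasDerivAt_id x)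
  exact h.congr_deriv (by linear_combination sin_sq_add_cos_sq x)

lemma chi1Profile_pos_of_le_pi_div_two {x : ℝ} (hx0 : 0 < x) (hx : x ≤ π / 2) :
    0 < chi1Profile x := by
  have hmono : StrictMonoOn chi1Profile (Icc 0 (π / 2)) := by
    refine strictMonoOn_of_deriv_pos (convex_Icc _ _) continuous_chi1Profile.continuousOn
      fun y hy => ?_
    rw [interior_Icc] at hy
    have hcos_pos : 0 < cos y := cos_pos_of_mem_Ioo ⟨by linarith [pi_pos, hy.1], hy.2⟩
    have hcos_lt : cos y < 1 := by
      simpa using cos_lt_cos_of_nonneg_of_le_pi le_rfl (by linarith [hy.2, pi_pos]) hy.1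
    rw [(hasDerivAt_chi1Profile y).deriv]
    exact mul_pos (by positivity) (by linarith)
  simpa [chi1Profile] using hmono ⟨le_rfl, by positivity⟩ ⟨hx0.le, hx⟩ hx0

lemma chi1Profile_neg_of_pi_le {x : ℝ} (hx : π ≤ x) : chi1Profile x < 0 := by
  have : sin x * (2 - cos x) ≤ 3 := by
    nlinarith [sin_le_one x, neg_one_le_sin x, cos_le_one x, neg_one_le_cos x]
  unfold chi1Profile
  linarith [pi_gt_three]

lemma chi1Profile_eq_zero_iff {x : ℝ} (hx : x ≠ 0) :
    chi1Profile x = 0 ↔ sin x / x * (2 - cos x) = 1 := by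
  rw [chi1Profile, div_mul_eq_mul_div, div_eq_one_iff_eq hx, sub_eq_zero]

section UniqueRoot

variable {ζ₀ : ℝ} (huniq : ∀ ζ ∈ Ioo 0 π, sin ζ / ζ * (2 - cos ζ) = 1 → ζ = ζ₀)
include huniq

lemma chi1Profile_ne_zero {x : ℝ} (hx0 : 0 < x) (hx : x ≠ ζ₀) : chi1Profile x ≠ 0 := by
  intro hzero
  rcases lt_or_ge x π with hxπ | hπx
  · exact hx (huniq x ⟨hx0, hxπ⟩ ((chi1Profile_eq_zero_iff hx0.ne').mp hzero))
  · exact (chi1Profile_neg_of_pi_le hπx).ne hzero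

lemma chi1Profile_pos_of_lt {x : ℝ} (hx0 : 0 < x) (hx : x < ζ₀) : 0 < chi1Profile x := by
  have hmin : min x (π / 2) ∈ Ioo 0 ζ₀ :=
    ⟨lt_min hx0 (by positivity), (min_le_left _ _).trans_lt hx⟩
  exact isPreconnected_Ioo.lt_of_forall_ne continuous_chi1Profile.continuousOn
    (fun y hy => chi1Profile_ne_zero huniq hy.1 hy.2.ne) hmin ⟨hx0, hx⟩
    (chi1Profile_pos_of_le_pi_div_two hmin.1 (min_le_right _ _))

lemma chi1Profile_neg_of_gt (hζ₀ : 0 ≤ ζ₀) {x : ℝ} (hx : ζ₀ < x) : chi1Profile x < 0 := by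
  have hmax : max x π ∈ Ioi ζ₀ := hx.trans_le (le_max_left _ _)
  have := isPreconnected_Ioi.lt_of_forall_ne continuous_chi1Profile.continuousOn.neg
    (fun y hy => neg_ne_zero.mpr (chi1Profile_ne_zero huniq (hζ₀.trans_lt hy) (ne_of_gt hy)))
    hmax hx (neg_pos.mpr (chi1Profile_neg_of_pi_le (le_max_right _ _)))
  exact neg_pos.mp this

end UniqueRoot

theorem chi1_qq_sign_general
    (q : ℕ) (hq : 1 ≤ q)
    (ζ₀ : ℝ) (hζ₀ : ζ₀ ∈ Set.Ioo (0:ℝ) π)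
    (huniq : ∀ ζ ∈ Set.Ioo (0:ℝ) π,
      (Real.sin ζ / ζ) * (2 - Real.cos ζ) = 1 → ζ = ζ₀)
    (χ₁ : ℝ → ℝ)
    (hχ₁ : ∀ κ, χ₁ κ = κ + Real.sin (4*π*q*κ) / (4*π*q) - Real.sin (2*π*q*κ) / (π*q)) :
    (∀ κ ∈ Set.Ioo (0:ℝ) (ζ₀ / (2*π*q)), κ < 1/2 → χ₁ κ < 0)
    ∧ (∀ κ ∈ Set.Ioo (ζ₀ / (2*π*q)) (1/2 : ℝ), 0 < χ₁ κ) := by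
  have hq0 : (0:ℝ) < q := by exact_mod_cast hq
  have hc : 0 < 2*π*q := by positivity
  have hχ₁' (κ : ℝ) : χ₁ κ = -chi1Profile (2*π*q*κ) / (2*π*q) := by
    rw [hχ₁, chi1_eq_neg_chi1Profile_div _ _ hq0.ne']
  refine ⟨fun κ ⟨hκ0, hκ⟩ _ => ?_, fun κ ⟨hκ, _⟩ => ?_⟩
  · rw [lt_div_iff₀ hc, mul_comm] at hκ
    rw [hχ₁', neg_div, neg_neg_iff_pos]
    exact div_pos (chi1Profile_pos_of_lt huniq (by positivity) hκ) hc
  · rw [div_lt_iff₀ hc, mul_comm] at hκ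
    rw [hχ₁', neg_div, neg_pos]
    exact div_neg_of_neg_of_pos (chi1Profile_neg_of_gt huniq hζ₀.1.le hκ) hc

theorem chi1_qq_sign
    (q : ℕ) (hq : 1 ≤ q)
    (ζ₀ : ℝ) (hζ₀ : ζ₀ ∈ Set.Ioo (0:ℝ) π)
    (hroot : (Real.sin ζ₀ / ζ₀) * (2 - Real.cos ζ₀) = 1)
    (huniq : ∀ ζ ∈ Set.Ioo (0:ℝ) π,
      (Real.sin ζ / ζ) * (2 - Real.cos ζ) = 1 → ζ = ζ₀)
    (χ₁ : ℝ → ℝ)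
    (hχ₁ : ∀ κ, χ₁ κ = κ + Real.sin (4*π*q*κ) / (4*π*q) - Real.sin (2*π*q*κ) / (π*q)) :
    (∀ κ ∈ Set.Ioo (0:ℝ) (ζ₀ / (2*π*q)), κ < 1/2 → χ₁ κ < 0)
    ∧ (∀ κ ∈ Set.Ioo (ζ₀ / (2*π*q)) (1/2 : ℝ), 0 < χ₁ κ) :=
  chi1_qq_sign_general q hq ζ₀ hζ₀ huniq χ₁ hχ₁
end

section
/- Let q ≥ 1 and ℓ ≥ 2q be integers and 0 < κ < 1/2. Then χ₁(κ; q, q) > χ₁(κ; ℓ, q), where χ₁(κ; q, q) = κ + sin(4πqκ)/(4πq) − sin(2πqκ)/(πq) and χ₁(κ; ℓ, q) = sin(2π(ℓ−q)κ)/(2π(ℓ−q)) + sin(2π(ℓ+q)κ)/(2π(ℓ+q)) − sin(2πqκ)/(πq). -/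
/-!
With `x = 4πqκ` and `y = 2π(ℓ - q)κ`, so that `x + y = 2π(ℓ + q)κ`, each `sin (a κ) / a` equals
`κ · sinc (a κ)`, and the claim becomes `sinc y + sinc (x + y) < 1 + sinc x` for `x > 0`,
`y ≥ x / 2`. If `x, y ≤ π` the difference is `∫₀¹ (1 + cos xs - cos ys - cos (x + y)s) ds`, whose
integrand equals `(1 - cos ys)(1 + cos xs) + sin xs sin ys > 0`. Otherwise the crude bounds
`sinc t ≤ 1 / t` and `sin x ≥ π - x` suffice.
-/

open Real

theorem integral_cos_mul_eq_sinc (c : ℝ) : ∫ s in (0 : ℝ)..1, cos (c * s) = sinc c := by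
  rcases eq_or_ne c 0 with rfl | hc
  · simp
  · rw [intervalIntegral.integral_comp_mul_left cos hc, integral_cos, sinc_of_ne_zero hc]
    simp [div_eq_inv_mul]

theorem one_add_cos_sub_cos_sub_cos_add_pos {a b : ℝ} (ha₀ : 0 < a) (ha : a < π)
    (hb₀ : 0 < b) (hb : b < π) : 0 < 1 + cos a - cos b - cos (a + b) := by
  have hsin : 0 < sin a * sin b :=
    mul_pos (sin_pos_of_pos_of_lt_pi ha₀ ha) (sin_pos_of_pos_of_lt_pi hb₀ hb)
  have hcos : 0 ≤ (1 - cos b) * (1 + cos a) :=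
    mul_nonneg (sub_nonneg.2 (cos_le_one b)) (by linarith [neg_one_le_cos a])
  calc 0 < (1 - cos b) * (1 + cos a) + sin a * sin b := by linarith
    _ = 1 + cos a - cos b - cos (a + b) := by rw [cos_add]; ring

theorem integral_one_add_cos_sub_cos_sub_cos (x y : ℝ) :
    ∫ s in (0 : ℝ)..1, (1 + cos (x * s) - cos (y * s) - cos ((x + y) * s)) =
      1 + sinc x - sinc y - sinc (x + y) := by
  rw [intervalIntegral.integral_sub, intervalIntegral.integral_sub, intervalIntegral.integral_add]
  · simp only [integral_cos_mul_eq_sinc, intervalIntegral.integral_const, sub_zero, smul_eq_mul,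
      mul_one]
  all_goals apply Continuous.intervalIntegrable; fun_prop

theorem sinc_add_sinc_add_lt_one_add_sinc_of_le_pi {x y : ℝ} (hx₀ : 0 < x) (hx : x ≤ π)
    (hy₀ : 0 < y) (hy : y ≤ π) : sinc y + sinc (x + y) < 1 + sinc x := by
  have hpos : 0 < ∫ s in (0 : ℝ)..1, (1 + cos (x * s) - cos (y * s) - cos ((x + y) * s)) := by
    refine intervalIntegral.intervalIntegral_pos_of_pos_on
      (Continuous.intervalIntegrable (by fun_prop) 0 1) (fun s ⟨hs₀, hs₁⟩ ↦ ?_) one_pos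
    rw [add_mul]
    exact one_add_cos_sub_cos_sub_cos_add_pos (by positivity) (by nlinarith) (by positivity)
      (by nlinarith)
  linarith [integral_one_add_cos_sub_cos_sub_cos x y]

theorem pi_sub_le_sin {x : ℝ} (hx : π ≤ x) : π - x ≤ sin x := by
  have h := sin_le (sub_nonneg.2 hx)
  rw [sin_sub_pi] at h
  linarith

theorem pi_div_le_one_add_sinc {x : ℝ} (hx : π ≤ x) : π / x ≤ 1 + sinc x := by
  have hx₀ : 0 < x := pi_pos.trans_le hx
  rw [sinc_of_ne_zero hx₀.ne', one_add_div hx₀.ne']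
  gcongr
  linarith [pi_sub_le_sin hx]

theorem sinc_nonneg_of_le_pi {x : ℝ} (hx₀ : 0 ≤ x) (hx : x ≤ π) : 0 ≤ sinc x := by
  rcases hx₀.eq_or_lt with rfl | hx₀
  · simp
  · rw [sinc_of_ne_zero hx₀.ne']
    exact div_nonneg (sin_nonneg_of_nonneg_of_le_pi hx₀.le hx) hx₀.le

theorem sinc_le_inv_of_pos {x : ℝ} (hx : 0 < x) : sinc x ≤ x⁻¹ := by
  simpa [abs_of_pos hx] using sinc_le_inv_abs hx.ne'

theorem sinc_add_sinc_add_lt_one_add_sinc {x y : ℝ} (hx : 0 < x) (hxy : x / 2 ≤ y) :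
    sinc y + sinc (x + y) < 1 + sinc x := by
  have hy : 0 < y := by linarith
  have h₁ := sinc_le_inv_of_pos hy
  have h₂ := sinc_le_inv_of_pos (add_pos hx hy)
  rcases le_or_gt x π with hxπ | hxπ
  · rcases le_or_gt y π with hyπ | hyπ
    · exact sinc_add_sinc_add_lt_one_add_sinc_of_le_pi hx hxπ hy hyπ
    · have h₃ : y⁻¹ < 2⁻¹ := inv_strictAnti₀ two_pos (by linarith [pi_gt_three])
      have h₄ : (x + y)⁻¹ < 2⁻¹ := inv_strictAnti₀ two_pos (by linarith [pi_gt_three])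
      linarith [sinc_nonneg_of_le_pi hx.le hxπ]
  · have h₃ : y⁻¹ ≤ (x / 2)⁻¹ := inv_anti₀ (by positivity) hxy
    have h₄ : (x + y)⁻¹ ≤ (3 * x / 2)⁻¹ := inv_anti₀ (by positivity) (by linarith)
    have h₅ : (x / 2)⁻¹ + (3 * x / 2)⁻¹ = (8 / 3) / x := by field_simp; ring
    have h₆ : (8 / 3) / x < π / x := div_lt_div_of_pos_right (by linarith [pi_gt_three]) hx
    linarith [pi_div_le_one_add_sinc hxπ.le]

theorem sin_mul_div_eq_mul_sinc {a : ℝ} (ha : a ≠ 0) (t : ℝ) :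
    sin (a * t) / a = t * sinc (a * t) := by
  rcases eq_or_ne t 0 with rfl | ht
  · simp
  · rw [sinc_of_ne_zero (mul_ne_zero ha ht)]
    field_simp

theorem chi1_q_dominates_general
    (ℓ q : ℕ) (hq : 1 ≤ q) (hℓ : 2 * q ≤ ℓ)
    (κ : ℝ) (hκ : 0 < κ) :
    κ + Real.sin (4*π*q*κ) / (4*π*q) - Real.sin (2*π*q*κ) / (π*q)
      > Real.sin (2*π*((ℓ:ℝ)-q)*κ) / (2*π*((ℓ:ℝ)-q))
        + Real.sin (2*π*((ℓ:ℝ)+q)*κ) / (2*π*((ℓ:ℝ)+q))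
        - Real.sin (2*π*q*κ) / (π*q) := by
  have hq₀ : (0 : ℝ) < q := by exact_mod_cast hq
  have hℓq : (q : ℝ) ≤ ℓ - q := by
    have : 2 * (q : ℝ) ≤ ℓ := by exact_mod_cast hℓ
    linarith
  have key := sinc_add_sinc_add_lt_one_add_sinc (x := 4 * π * q * κ) (y := 2 * π * (ℓ - q) * κ)
    (by positivity) (by nlinarith [mul_le_mul_of_nonneg_left hℓq (by positivity : 0 ≤ 2 * π * κ)])
  rw [show 4 * π * q * κ + 2 * π * (ℓ - q) * κ = 2 * π * (ℓ + q) * κ by ring] at key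
  rw [sin_mul_div_eq_mul_sinc (by positivity),
    sin_mul_div_eq_mul_sinc (mul_pos two_pi_pos (by linarith)).ne',
    sin_mul_div_eq_mul_sinc (by positivity)]
  linarith [mul_lt_mul_of_pos_left key hκ]

theorem chi1_q_dominates
    (ℓ q : ℕ) (hq : 1 ≤ q) (hℓ : 2 * q ≤ ℓ)
    (κ : ℝ) (hκ : 0 < κ) (hκ' : κ < 1/2) :
    κ + Real.sin (4*π*q*κ) / (4*π*q) - Real.sin (2*π*q*κ) / (π*q)
      > Real.sin (2*π*((ℓ:ℝ)-q)*κ) / (2*π*((ℓ:ℝ)-q))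
        + Real.sin (2*π*((ℓ:ℝ)+q)*κ) / (2*π*((ℓ:ℝ)+q))
        - Real.sin (2*π*q*κ) / (π*q) :=
  chi1_q_dominates_general ℓ q hq hℓ κ hκ
end

section
/- If z ∈ [−1,1] satisfies |(2z² − 2z − 1)/(z − 2)| < 1/π, then z ∈ (−7/12, −1/8). -/
open Real Set

theorem psi2_localization (z : ℝ) (hz : z ∈ Set.Icc (-1:ℝ) 1)
    (h : |(2*z^2 - 2*z - 1) / (z - 2)| < 1/π) :
    z ∈ Set.Ioo (-(7:ℝ)/12) (-(1:ℝ)/8) := by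
  obtain ⟨h1, h2⟩ := hz
  have hπ := Real.pi_gt_d6
  have hπ0 : (0:ℝ) < π := Real.pi_pos
  have hd : z - 2 < 0 := by linarith
  have habs : |z - 2| = 2 - z := by rw [abs_of_neg hd]; ring
  rw [abs_div, habs] at h
  have hden : (0:ℝ) < 2 - z := by linarith
  have key : π * |2*z^2 - 2*z - 1| < 2 - z := by
    rw [div_lt_div_iff₀ hden hπ0] at h; linarith
  have k1 : π * (2*z^2 - 2*z - 1) < 2 - z :=
    lt_of_le_of_lt (by nlinarith [le_abs_self (2*z^2 - 2*z - 1)]) key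
  have k2 : π * (-(2*z^2 - 2*z - 1)) < 2 - z :=
    lt_of_le_of_lt (by nlinarith [neg_abs_le (2*z^2 - 2*z - 1)]) key
  constructor
  · by_contra hc; push_neg at hc
    nlinarith [mul_nonneg (by linarith : (0:ℝ) ≤ -(7:ℝ)/12 - z) (by linarith : (0:ℝ) ≤ z + 1), hπ, hπ0]
  · by_contra hc; push_neg at hc
    nlinarith [mul_nonneg (by linarith : (0:ℝ) ≤ z + 1/8) (by linarith : (0:ℝ) ≤ 1 - z), hπ, hπ0]
end

section
/- For every ζ ∈ (π/3, π/2), d/dζ[sin ζ/ζ] > −4/π² and d/dζ[ψ₂(cos ζ)] < −√3/3, where ψ₂(z) = (2z² − 2z − 1)/(z − 2); consequently the equation sin ζ/ζ = ψ₂(cos ζ) has exactly one solution in (π/3, π/2). -/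
/-!
Put φ(ζ) = sin ζ/ζ − ψ₂(cos ζ). On (π/3, π/2) we have sin ζ > √3/2 and 0 < cos ζ < 1/2, which
gives d/dζ ψ₂(cos ζ) < −√3/3 directly, while d/dζ (sin ζ/ζ) > −4/π² follows because
4ζ²/π² − (sin ζ − ζ cos ζ) is decreasing there (its derivative is ζ(8/π² − sin ζ)) and vanishes
at π/2. Since 4/π² < √3/3, φ is strictly increasing, and φ(π/3) = 3√3/(2π) − 1 < 0 < 2/π − 1/2
= φ(π/2), so φ has exactly one zero.
-/

open Real Set

noncomputable def psi₂ (z : ℝ) : ℝ := (2 * z ^ 2 - 2 * z - 1) / (z - 2)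

lemma hasDerivAt_sin_div_self {x : ℝ} (hx : x ≠ 0) :
    HasDerivAt (fun z => sin z / z) ((cos x * x - sin x) / x ^ 2) x := by
  refine ((hasDerivAt_sin x).div (hasDerivAt_id x) hx).congr_deriv ?_
  simp

lemma hasDerivAt_psi₂ {z : ℝ} (hz : z ≠ 2) :
    HasDerivAt psi₂ ((2 * z ^ 2 - 8 * z + 5) / (z - 2) ^ 2) z := by
  have hnum : HasDerivAt (fun z : ℝ => 2 * z ^ 2 - 2 * z - 1) (4 * z - 2) z := by
    refine (((((hasDerivAt_id' z).pow 2).const_mul 2).sub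
      ((hasDerivAt_id' z).const_mul 2)).sub_const 1).congr_deriv ?_
    norm_num
    ring
  refine (hnum.div ((hasDerivAt_id z).sub_const 2) (sub_ne_zero.mpr hz)).congr_deriv ?_
  simp only [id]
  ring

lemma hasDerivAt_psi₂_cos (x : ℝ) :
    HasDerivAt (fun z => psi₂ (cos z))
      ((2 * cos x ^ 2 - 8 * cos x + 5) / (cos x - 2) ^ 2 * -sin x) x :=
  (hasDerivAt_psi₂ (by linarith [cos_le_one x])).comp x (hasDerivAt_cos x)

lemma sqrt_three_div_two_lt_sin {x : ℝ} (hx : x ∈ Ioo (π / 3) (π / 2)) : √3 / 2 < sin x := by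
  rw [← sin_pi_div_three]
  exact sin_lt_sin_of_lt_of_le_pi_div_two (by linarith [pi_pos]) hx.2.le hx.1

lemma cos_mem_Ioo {x : ℝ} (hx : x ∈ Ioo (π / 3) (π / 2)) : cos x ∈ Ioo 0 (1 / 2) := by
  refine ⟨cos_pos_of_mem_Ioo ⟨by linarith [pi_pos, hx.1], hx.2⟩, ?_⟩
  rw [← cos_pi_div_three]
  exact cos_lt_cos_of_nonneg_of_le_pi_div_two (by positivity) hx.2.le hx.1

lemma sixteen_lt_sqrt_three_mul_pi_sq : 16 < √3 * π ^ 2 := by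
  have hsqrt : 1.732 < √3 := by
    rw [lt_sqrt (by norm_num)]
    norm_num
  nlinarith [pi_gt_d2]

lemma sin_sub_mul_cos_lt {x : ℝ} (hx : x ∈ Ioo (π / 3) (π / 2)) :
    sin x - x * cos x < 4 * x ^ 2 / π ^ 2 := by
  set g : ℝ → ℝ := fun z => 4 * z ^ 2 / π ^ 2 - (sin z - z * cos z)
  have hg : ∀ z, HasDerivAt g (z * (8 / π ^ 2 - sin z)) z := fun z => by
    refine (((((hasDerivAt_id' z).pow 2).const_mul 4).div_const (π ^ 2)).sub
      ((hasDerivAt_sin z).sub ((hasDerivAt_id' z).mul (hasDerivAt_cos z)))).congr_deriv ?_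
    norm_num
    ring
  have hanti : StrictAntiOn g (Icc (π / 3) (π / 2)) := by
    refine strictAntiOn_of_deriv_neg (convex_Icc _ _)
      (fun z _ => (hg z).continuousAt.continuousWithinAt) fun z hz => ?_
    rw [interior_Icc] at hz
    rw [(hg z).deriv]
    have h8 : 8 / π ^ 2 < √3 / 2 := by
      rw [div_lt_div_iff₀ (by positivity) two_pos]
      linarith [sixteen_lt_sqrt_three_mul_pi_sq]
    exact mul_neg_of_pos_of_neg (by linarith [pi_pos, hz.1])
      (by linarith [sqrt_three_div_two_lt_sin hz])
  have hend : g (π / 2) = 0 := by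
    simp only [g, sin_pi_div_two, cos_pi_div_two]
    field_simp
    ring
  have := hanti ⟨hx.1.le, hx.2.le⟩ ⟨by linarith [pi_pos], le_rfl⟩ hx.2
  simp only [hend, g] at this
  linarith

lemma neg_four_div_pi_sq_lt_deriv_sin_div_self {x : ℝ} (hx : x ∈ Ioo (π / 3) (π / 2)) :
    -4 / π ^ 2 < deriv (fun z => sin z / z) x := by
  have hx0 : 0 < x := by linarith [pi_pos, hx.1]
  rw [(hasDerivAt_sin_div_self hx0.ne').deriv, div_lt_div_iff₀ (by positivity) (by positivity)]
  have := sin_sub_mul_cos_lt hx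
  rw [lt_div_iff₀ (by positivity)] at this
  linarith

lemma deriv_psi₂_cos_lt_neg_sqrt_three_div_three {x : ℝ} (hx : x ∈ Ioo (π / 3) (π / 2)) :
    deriv (fun z => psi₂ (cos z)) x < -√3 / 3 := by
  rw [(hasDerivAt_psi₂_cos x).deriv]
  obtain ⟨hc₀, hc₁⟩ := cos_mem_Ioo hx
  have hs := sqrt_three_div_two_lt_sin hx
  set c := cos x
  have hnum : 0 < 2 * c ^ 2 - 8 * c + 5 := by nlinarith
  -- 3(2c² − 8c + 5) − 2(c − 2)² = (2c − 1)(2c − 7) ≥ 0 for c ≤ 1/2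
  have hratio : 2 / 3 ≤ (2 * c ^ 2 - 8 * c + 5) / (c - 2) ^ 2 := by
    rw [div_le_div_iff₀ (by norm_num) (by nlinarith)]
    nlinarith
  nlinarith [sqrt_nonneg 3]

lemma sin_div_lt_psi₂_cos_pi_div_three : sin (π / 3) / (π / 3) < psi₂ (cos (π / 3)) := by
  have hsqrt : √3 < 2 := by
    rw [sqrt_lt' two_pos]
    norm_num
  rw [sin_pi_div_three, cos_pi_div_three, psi₂, div_lt_iff₀ (by positivity)]
  norm_num
  nlinarith [pi_gt_three]

lemma psi₂_cos_lt_sin_div_pi_div_two : psi₂ (cos (π / 2)) < sin (π / 2) / (π / 2) := by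
  rw [sin_pi_div_two, cos_pi_div_two, psi₂, lt_div_iff₀ (by positivity)]
  norm_num
  linarith [pi_lt_four]

lemma existsUnique_zero_of_strictMonoOn {f : ℝ → ℝ} {a b : ℝ} (hab : a ≤ b)
    (hcont : ContinuousOn f (Icc a b)) (hmono : StrictMonoOn f (Icc a b))
    (ha : f a < 0) (hb : 0 < f b) : ∃! x, x ∈ Ioo a b ∧ f x = 0 := by
  obtain ⟨x, hx, hfx⟩ := intermediate_value_Ioo hab hcont ⟨ha, hb⟩
  refine ⟨x, ⟨hx, hfx⟩, fun y ⟨hy, hfy⟩ => ?_⟩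
  exact hmono.injOn (Ioo_subset_Icc_self hy) (Ioo_subset_Icc_self hx) (hfy.trans hfx.symm)

theorem first_critical_point
    (ψ₂ : ℝ → ℝ) (hψ₂ : ∀ z, ψ₂ z = (2*z^2 - 2*z - 1) / (z - 2)) :
    (∀ ζ ∈ Set.Ioo (π/3) (π/2),
      deriv (fun z : ℝ => Real.sin z / z) ζ > -4/π^2
      ∧ deriv (fun z : ℝ => ψ₂ (Real.cos z)) ζ < -Real.sqrt 3 / 3)
    ∧ (∃! ζ : ℝ, ζ ∈ Set.Ioo (π/3) (π/2) ∧ Real.sin ζ / ζ = ψ₂ (Real.cos ζ)) := by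
  obtain rfl : ψ₂ = psi₂ := funext hψ₂
  refine ⟨fun x hx => ⟨neg_four_div_pi_sq_lt_deriv_sin_div_self hx,
    deriv_psi₂_cos_lt_neg_sqrt_three_div_three hx⟩, ?_⟩
  set φ : ℝ → ℝ := fun z => sin z / z - psi₂ (cos z)
  have hφ : ∀ x ∈ Icc (π / 3) (π / 2),
      HasDerivAt φ (deriv (fun z => sin z / z) x - deriv (fun z => psi₂ (cos z)) x) x :=
    fun x hx => by
      have hx0 : x ≠ 0 := by linarith [pi_pos, hx.1]
      exact (hasDerivAt_sin_div_self hx0).differentiableAt.hasDerivAt.sub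
        (hasDerivAt_psi₂_cos x).differentiableAt.hasDerivAt
  have hcont : ContinuousOn φ (Icc (π / 3) (π / 2)) := fun x hx =>
    (hφ x hx).continuousAt.continuousWithinAt
  have hmono : StrictMonoOn φ (Icc (π / 3) (π / 2)) := by
    refine strictMonoOn_of_deriv_pos (convex_Icc _ _) hcont fun x hx => ?_
    rw [interior_Icc] at hx
    rw [(hφ x (Ioo_subset_Icc_self hx)).deriv]
    have hgap : -√3 / 3 < -4 / π ^ 2 := by
      rw [neg_div, neg_div, neg_lt_neg_iff, div_lt_div_iff₀ (by positivity) three_pos]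
      linarith [sixteen_lt_sqrt_three_mul_pi_sq]
    exact (sub_pos.mpr hgap).trans (sub_lt_sub (neg_four_div_pi_sq_lt_deriv_sin_div_self hx)
      (deriv_psi₂_cos_lt_neg_sqrt_three_div_three hx))
  simpa only [φ, sub_eq_zero] using existsUnique_zero_of_strictMonoOn (by linarith [pi_pos])
    hcont hmono (sub_neg.mpr sin_div_lt_psi₂_cos_pi_div_three)
    (sub_pos.mpr psi₂_cos_lt_sin_div_pi_div_two)
end
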